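/- arXiv:0808.2316 — 3 statements merged into one kernel-verified Lean document; each statement's English description precedes it below -/
import Mathlib

section
/- Let A be a symmetric n×n real matrix, p, g ∈ ℝⁿ with p ≠ 0, pᵀg = 0, pᵀAp ≠ 0, g = p - α A p with α = (pᵀp)/(pᵀAp), and L = I + p gᵀ/‖p‖². Set A' = Lᵀ A L. Then for every i ≥ 0, pᵀ (A')ⁱ g = 0. -/
open Matrix

theorem vecMulVec_mulVec' (n : ℕ) (p g v : Fin n → ℝ) :
    vecMulVec p g *ᵥ v = (g ⬝ᵥ v) • p := by
  ext i
  simp only [mulVec, vecMulVec_apply, dotProduct, Pi.smul_apply, smul_eq_mul,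
    Finset.sum_mul]
  exact Finset.sum_congr rfl fun j _ => by ring

theorem vecMulVec_transpose' (n : ℕ) (p g : Fin n → ℝ) :
    (vecMulVec p g)ᵀ = vecMulVec g p := by
  ext i j
  simp [vecMulVec_apply, mul_comm]

theorem krylov_orthogonal_to_p (n : ℕ) (A : Matrix (Fin n) (Fin n) ℝ)
    (hA : A.IsSymm) (p g : Fin n → ℝ) (hp : p ≠ 0)
    (hpAp : p ⬝ᵥ (A *ᵥ p) ≠ 0)
    (α : ℝ) (hα : α = (p ⬝ᵥ p) / (p ⬝ᵥ (A *ᵥ p)))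
    (hg : g = p - α • (A *ᵥ p)) (hpg : p ⬝ᵥ g = 0)
    (L A' : Matrix (Fin n) (Fin n) ℝ)
    (hL : L = 1 + (p ⬝ᵥ p)⁻¹ • vecMulVec p g)
    (hA' : A' = Lᵀ * A * L) :
    ∀ i : ℕ, p ⬝ᵥ ((A' ^ i) *ᵥ g) = 0 := by
  have hpp : p ⬝ᵥ p ≠ 0 := fun h => hp (dotProduct_self_eq_zero.mp h)
  set lam : ℝ := (p ⬝ᵥ (A *ᵥ p)) / (p ⬝ᵥ p) with hlam
  have hLp : L *ᵥ p = p := by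
    rw [hL, add_mulVec, one_mulVec, smul_mulVec, vecMulVec_mulVec',
      dotProduct_comm g p, hpg]
    simp
  have hLT : Lᵀ = 1 + (p ⬝ᵥ p)⁻¹ • vecMulVec g p := by
    rw [hL, transpose_add, transpose_one, transpose_smul, vecMulVec_transpose']
  have h2 : (p ⬝ᵥ p)⁻¹ * (p ⬝ᵥ (A *ᵥ p)) = lam := by
    rw [hlam]; ring
  have h3 : lam * α = 1 := by
    rw [hlam, hα]; field_simp
  have hLtAp : Lᵀ *ᵥ (A *ᵥ p) = lam • p := by
    rw [hLT, add_mulVec, one_mulVec, smul_mulVec, vecMulVec_mulVec', hg,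
      smul_smul, h2, smul_sub, smul_smul, h3, one_smul]
    abel
  have key : ∀ v : Fin n → ℝ, p ⬝ᵥ (A' *ᵥ v) = lam * (p ⬝ᵥ v) := by
    intro v
    have hA'T : A'ᵀ *ᵥ p = lam • p := by
      rw [hA', Matrix.transpose_mul, Matrix.transpose_mul, transpose_transpose,
        hA.eq, ← mulVec_mulVec, ← mulVec_mulVec, hLp, hLtAp]
    rw [dotProduct_mulVec, ← mulVec_transpose, hA'T, smul_dotProduct]
    simp
  intro i
  induction i with
  | zero => simpa using hpg
  | succ i ih =>
    rw [pow_succ', ← mulVec_mulVec, key, ih, mul_zero]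
end

section
/- Let A be a symmetric positive definite n×n matrix and let p ∈ ℝⁿ be nonzero. Define g = p - α A p with α = pᵀp/(pᵀAp), L = I + p gᵀ/‖p‖², and A' = Lᵀ A L. Let K(A,p) denote the smallest A-invariant subspace containing p (the Krylov subspace span{p, Ap, A²p, ...}). Then K(A', g) is a proper subspace of K(A, p). -/
/-!
With `α = pᵀp / pᵀAp` and `g = p - α A p` we have `pᵀg = 0`. Hence `L p = p` and
`Lᵀ A p = α⁻¹ p`, so `p` is an eigenvector of the symmetric matrix `A' = Lᵀ A L`, and `A'`
preserves `p^⊥`. Since `L` and `Lᵀ` only add multiples of `p` and `g`, both in `K(A, p)`, `A'`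
also preserves `K(A, p)`. Therefore `K(A', g) ⊆ K(A, p) ∩ p^⊥`, which misses `p ∈ K(A, p)`.
-/

open Matrix

namespace Matrix

section Krylov

variable {R m : Type*} [CommRing R] [Fintype m] [DecidableEq m]

def krylov (A : Matrix m m R) (v : m → R) : Submodule R (m → R) :=
  Submodule.span R {x | ∃ i : ℕ, x = (A ^ i) *ᵥ v}

variable {A : Matrix m m R} {v w : m → R}

lemma pow_mulVec_mem_krylov (i : ℕ) : (A ^ i) *ᵥ v ∈ krylov A v :=
  Submodule.subset_span ⟨i, rfl⟩

lemma self_mem_krylov : v ∈ krylov A v := by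
  simpa using pow_mulVec_mem_krylov (A := A) (v := v) 0

lemma mulVec_self_mem_krylov : A *ᵥ v ∈ krylov A v := by
  simpa using pow_mulVec_mem_krylov (A := A) (v := v) 1

lemma mulVec_mem_krylov (hw : w ∈ krylov A v) : A *ᵥ w ∈ krylov A v := by
  induction hw using Submodule.span_induction with
  | mem x hx =>
    obtain ⟨i, rfl⟩ := hx
    simpa only [mulVec_mulVec, ← pow_succ'] using pow_mulVec_mem_krylov (A := A) (v := v) (i + 1)
  | zero => simp
  | add x y _ _ hx hy => simpa only [mulVec_add] using add_mem hx hy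
  | smul c x _ hx => simpa only [mulVec_smul] using Submodule.smul_mem _ c hx

lemma krylov_le {W : Submodule R (m → R)} (hv : v ∈ W) (hW : ∀ w ∈ W, A *ᵥ w ∈ W) :
    krylov A v ≤ W := by
  rw [krylov, Submodule.span_le]
  rintro x ⟨i, rfl⟩
  induction i with
  | zero => simpa using hv
  | succ i ih =>
    rw [pow_succ', ← mulVec_mulVec]
    exact hW _ ih

end Krylov

section Symm

variable {R m : Type*} [CommRing R] [Fintype m] {A : Matrix m m R}

lemma IsSymm.dotProduct_mulVec_comm (hA : A.IsSymm) (u v : m → R) :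
    u ⬝ᵥ (A *ᵥ v) = (A *ᵥ u) ⬝ᵥ v := by
  rw [dotProduct_mulVec, ← mulVec_transpose, hA.eq]

lemma IsSymm.transpose_mul_mul (hA : A.IsSymm) (L : Matrix m m R) : (Lᵀ * A * L).IsSymm := by
  rw [IsSymm, transpose_mul, transpose_mul, hA.eq, transpose_transpose, Matrix.mul_assoc]

lemma IsSymm.dotProduct_mulVec_eq_zero_of_mulVec_eq_smul (hA : A.IsSymm) {p v : m → R} {c : R}
    (hp : A *ᵥ p = c • p) (hv : p ⬝ᵥ v = 0) : p ⬝ᵥ (A *ᵥ v) = 0 := by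
  rw [hA.dotProduct_mulVec_comm, hp, smul_dotProduct, hv, smul_zero]

variable [DecidableEq m]

/-- `K(A, g)` lies in `S ∩ p^⊥`, which is smaller than `S` since it misses `p`. -/
lemma IsSymm.krylov_lt_of_mulVec_eq_smul (hA : A.IsSymm) {p g : m → R} {c : R}
    {S : Submodule R (m → R)} (hAp : A *ᵥ p = c • p) (hAS : ∀ v ∈ S, A *ᵥ v ∈ S)
    (hpS : p ∈ S) (hpp : p ⬝ᵥ p ≠ 0) (hgS : g ∈ S) (hpg : p ⬝ᵥ g = 0) :
    krylov A g < S := by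
  let pPerp := LinearMap.ker (dotProductEquiv R m p)
  have hle : krylov A g ≤ S ⊓ pPerp :=
    krylov_le ⟨hgS, hpg⟩ fun v hv ↦
      ⟨hAS v hv.1, hA.dotProduct_mulVec_eq_zero_of_mulVec_eq_smul hAp hv.2⟩
  exact hle.trans_lt (inf_lt_left.2 fun h ↦ hpp (h hpS))

end Symm

section RankOneUpdate

variable {R m : Type*} [CommRing R] [Fintype m] [DecidableEq m]

lemma one_add_smul_vecMulVec_mulVec (c : R) (u w v : m → R) :
    (1 + c • vecMulVec u w) *ᵥ v = v + (c * (w ⬝ᵥ v)) • u := by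
  rw [add_mulVec, one_mulVec, smul_mulVec, vecMulVec_mulVec, op_smul_eq_smul, smul_smul]

lemma one_add_smul_vecMulVec_mulVec_mem {S : Submodule R (m → R)} (c : R) {u v : m → R}
    (w : m → R) (hu : u ∈ S) (hv : v ∈ S) : (1 + c • vecMulVec u w) *ᵥ v ∈ S := by
  rw [one_add_smul_vecMulVec_mulVec]
  exact add_mem hv (S.smul_mem _ hu)

lemma transpose_mul_mul_mulVec_mem_krylov {A : Matrix m m R} {p u w v : m → R} (c : R)
    (hu : u ∈ krylov A p) (hw : w ∈ krylov A p) (hv : v ∈ krylov A p) :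
    ((1 + c • vecMulVec u w)ᵀ * A * (1 + c • vecMulVec u w)) *ᵥ v ∈ krylov A p := by
  rw [← mulVec_mulVec, ← mulVec_mulVec, transpose_add, transpose_one, transpose_smul,
    transpose_vecMulVec]
  exact one_add_smul_vecMulVec_mulVec_mem c u hw <| mulVec_mem_krylov <|
    one_add_smul_vecMulVec_mulVec_mem c w hu hv

end RankOneUpdate

section DescentStep

variable {K m : Type*} [Field K] [Fintype m] {A : Matrix m m K} {p : m → K}

lemma dotProduct_sub_smul_mulVec_eq_zero (hpAp : p ⬝ᵥ (A *ᵥ p) ≠ 0) :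
    p ⬝ᵥ (p - ((p ⬝ᵥ p) / (p ⬝ᵥ (A *ᵥ p))) • (A *ᵥ p)) = 0 := by
  rw [dotProduct_sub, dotProduct_smul, smul_eq_mul, div_mul_cancel₀ _ hpAp, sub_self]

variable [DecidableEq m]

lemma transpose_mul_mul_mulVec_eq_inv_smul (hpp : p ⬝ᵥ p ≠ 0) (hpAp : p ⬝ᵥ (A *ᵥ p) ≠ 0)
    {α : K} (hα : α = (p ⬝ᵥ p) / (p ⬝ᵥ (A *ᵥ p)))
    {g : m → K} (hg : g = p - α • (A *ᵥ p))
    {L : Matrix m m K} (hL : L = 1 + (p ⬝ᵥ p)⁻¹ • vecMulVec p g) :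
    (Lᵀ * A * L) *ᵥ p = α⁻¹ • p := by
  have hgp : g ⬝ᵥ p = 0 := by
    rw [dotProduct_comm, hg, hα]
    exact dotProduct_sub_smul_mulVec_eq_zero hpAp
  have hLp : L *ᵥ p = p := by
    rw [hL, one_add_smul_vecMulVec_mulVec, hgp, mul_zero, zero_smul, add_zero]
  have hα₀ : α ≠ 0 := hα ▸ div_ne_zero hpp hpAp
  have hcoeff : (p ⬝ᵥ p)⁻¹ * (p ⬝ᵥ (A *ᵥ p)) = α⁻¹ := by
    rw [hα, inv_div, div_eq_inv_mul]
  have hLtAp : Lᵀ *ᵥ (A *ᵥ p) = α⁻¹ • p := by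
    rw [hL, transpose_add, transpose_one, transpose_smul, transpose_vecMulVec,
      one_add_smul_vecMulVec_mulVec, hcoeff, hg, smul_sub, smul_smul, inv_mul_cancel₀ hα₀,
      one_smul]
    abel
  rw [← mulVec_mulVec, ← mulVec_mulVec, hLp, hLtAp]

end DescentStep

end Matrix

theorem krylov_strictly_decreases (n : ℕ) (A : Matrix (Fin n) (Fin n) ℝ)
    (hA : A.PosDef) (p : Fin n → ℝ) (hp : p ≠ 0)
    (α : ℝ) (hα : α = (p ⬝ᵥ p) / (p ⬝ᵥ (A *ᵥ p)))
    (g : Fin n → ℝ) (hg : g = p - α • (A *ᵥ p))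
    (L A' : Matrix (Fin n) (Fin n) ℝ)
    (hL : L = 1 + (p ⬝ᵥ p)⁻¹ • vecMulVec p g)
    (hA' : A' = Lᵀ * A * L) :
    Submodule.span ℝ {x : Fin n → ℝ | ∃ i : ℕ, x = (A' ^ i) *ᵥ g} <
      Submodule.span ℝ {x : Fin n → ℝ | ∃ i : ℕ, x = (A ^ i) *ᵥ p} := by
  have hAsymm : A.IsSymm := isHermitian_iff_isSymm.mp hA.isHermitian
  have hpp : p ⬝ᵥ p ≠ 0 := dotProduct_self_eq_zero.not.mpr hp
  have hpAp : p ⬝ᵥ (A *ᵥ p) ≠ 0 := by simpa using (hA.dotProduct_mulVec_pos hp).ne'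
  have hpg : p ⬝ᵥ g = 0 := hg ▸ hα ▸ dotProduct_sub_smul_mulVec_eq_zero hpAp
  have hgK : g ∈ krylov A p :=
    hg ▸ sub_mem self_mem_krylov (Submodule.smul_mem _ α mulVec_self_mem_krylov)
  have hA'p : A' *ᵥ p = α⁻¹ • p := hA' ▸ transpose_mul_mul_mulVec_eq_inv_smul hpp hpAp hα hg hL
  have hA'K : ∀ v ∈ krylov A p, A' *ᵥ v ∈ krylov A p := fun v hv ↦
    hA' ▸ hL ▸ transpose_mul_mul_mulVec_mem_krylov _ self_mem_krylov hgK hv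
  exact (hA' ▸ hAsymm.transpose_mul_mul L).krylov_lt_of_mulVec_eq_smul hA'p hA'K
    self_mem_krylov hpp hgK hpg
end

section
/- In the linear conjugate gradient algorithm applied to f(x) = xᵀAx/2 - bᵀx with A symmetric positive definite, the residuals r_k = b - A x_k generated by the algorithm are pairwise orthogonal: r_iᵀ r_j = 0 for i ≠ j (as long as none is zero). -/
open Matrix

/-!
Induction on the step: the new residual `r (k+1)` is orthogonal to all earlier directions
(exact line search along `p k`, plus conjugacy of the older ones), and the new direction
`p (k+1)` is `A`-conjugate to all earlier ones (`β k` is chosen for `p k`; for older `p l`,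
`A p l` is a multiple of `r l - r (l+1)`, which is orthogonal to `r (k+1)`). Since `r i` is a
combination of `p i` and `p (i-1)`, orthogonality of `r j` to the earlier directions is
orthogonality to the earlier residuals.
-/

theorem Matrix.IsSymm.dotProduct_mulVec_comm_s13 {ι R : Type*} [Fintype ι] [CommSemiring R]
    {A : Matrix ι ι R} (hA : A.IsSymm) (v w : ι → R) : v ⬝ᵥ (A *ᵥ w) = w ⬝ᵥ (A *ᵥ v) := by
  rw [dotProduct_mulVec, ← mulVec_transpose, hA.eq, dotProduct_comm]

/-- One run of linear conjugate gradient, indexed from `0`: the direction `p k` is the paper's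
`n_{k+1}`, and `α k`, `β k` are the paper's `α_{k+1}`, `β_{k+2}`. -/
structure IsCGSequence {ι : Type*} [Fintype ι] (A : Matrix ι ι ℝ) (r p : ℕ → ι → ℝ)
    (α β : ℕ → ℝ) : Prop where
  dir_zero : p 0 = r 0
  stepSize_eq (k : ℕ) : α k = r k ⬝ᵥ r k / (p k ⬝ᵥ (A *ᵥ p k))
  residual_succ (k : ℕ) : r (k + 1) = r k - α k • (A *ᵥ p k)
  conjCoeff_eq (k : ℕ) : β k = r (k + 1) ⬝ᵥ r (k + 1) / (r k ⬝ᵥ r k)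
  dir_succ (k : ℕ) : p (k + 1) = β k • p k + r (k + 1)

namespace IsCGSequence

variable {ι : Type*} [Fintype ι] {A : Matrix ι ι ℝ} {r p : ℕ → ι → ℝ} {α β : ℕ → ℝ}
  (h : IsCGSequence A r p α β)
include h

theorem residual_dotProduct_residual_eq_zero_of_dir_orthogonal {i j : ℕ}
    (hj : ∀ l < j, p l ⬝ᵥ r j = 0) (hij : i < j) : r i ⬝ᵥ r j = 0 := by
  cases i with
  | zero => rw [← h.dir_zero, hj 0 hij]
  | succ i =>
    rw [show r (i + 1) = p (i + 1) - β i • p i by rw [h.dir_succ]; abel, sub_dotProduct,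
      smul_dotProduct, hj (i + 1) hij, hj i (by omega), smul_zero, sub_zero]

theorem dir_dotProduct_residual_self {k : ℕ} (hk : ∀ l < k, p l ⬝ᵥ r k = 0) :
    p k ⬝ᵥ r k = r k ⬝ᵥ r k := by
  cases k with
  | zero => rw [h.dir_zero]
  | succ k => rw [h.dir_succ, add_dotProduct, smul_dotProduct, hk k k.lt_succ_self, smul_zero,
      zero_add]

theorem dir_dotProduct_residual_succ {k : ℕ} (hpr : p k ⬝ᵥ r k = r k ⬝ᵥ r k)
    (hpAp : p k ⬝ᵥ (A *ᵥ p k) ≠ 0) (horth : ∀ l < k, p l ⬝ᵥ r k = 0)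
    (hconj : ∀ l < k, p l ⬝ᵥ (A *ᵥ p k) = 0) : ∀ l < k + 1, p l ⬝ᵥ r (k + 1) = 0 := by
  intro l hl
  rw [h.residual_succ, dotProduct_sub, dotProduct_smul, smul_eq_mul]
  rcases (Nat.lt_succ_iff.mp hl).lt_or_eq with hlk | rfl
  · rw [horth l hlk, hconj l hlk, mul_zero, sub_zero]
  · rw [h.stepSize_eq, ← hpr, div_mul_cancel₀ _ hpAp, sub_self]

theorem dotProduct_mulVec_dir_eq {k : ℕ} (hα : α k ≠ 0) (v : ι → ℝ) :
    v ⬝ᵥ (A *ᵥ p k) = (v ⬝ᵥ r k - v ⬝ᵥ r (k + 1)) / α k := by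
  rw [eq_div_iff hα, ← dotProduct_sub, h.residual_succ, sub_sub_cancel, dotProduct_smul,
    smul_eq_mul, mul_comm]

theorem dir_dotProduct_mulVec_dir_succ (hA : A.IsSymm) {k : ℕ} (hα : ∀ l ≤ k, α l ≠ 0)
    (hconj : ∀ l < k, p l ⬝ᵥ (A *ᵥ p k) = 0) (hres : ∀ l ≤ k, r l ⬝ᵥ r (k + 1) = 0) :
    ∀ l < k + 1, p l ⬝ᵥ (A *ᵥ p (k + 1)) = 0 := by
  intro l hl
  have hl' := Nat.lt_succ_iff.mp hl
  rw [h.dir_succ, mulVec_add, mulVec_smul, dotProduct_add, dotProduct_smul, smul_eq_mul,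
    hA.dotProduct_mulVec_comm_s13 (p l) (r (k + 1)), h.dotProduct_mulVec_dir_eq (hα l hl'),
    dotProduct_comm (r (k + 1)) (r l), hres l hl']
  rcases hl'.lt_or_eq with hlk | rfl
  · rw [hconj l hlk, dotProduct_comm (r (k + 1)), hres (l + 1) hlk]
    ring
  · -- `β k * (p k ⬝ A p k) = r (k + 1) ⬝ r (k + 1) / α k` is an identity of the two formulas.
    rw [h.conjCoeff_eq, h.stepSize_eq, div_div_eq_mul_div]
    ring

theorem dir_orthogonal_and_conjugate (hA : A.PosDef) :
    ∀ m, (∀ l < m, r l ≠ 0) → ∀ j ≤ m, ∀ i < j,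
      p i ⬝ᵥ r j = 0 ∧ p i ⬝ᵥ (A *ᵥ p j) = 0 := by
  intro m
  induction m with
  | zero => intro _ j hj i hij; omega
  | succ m ih =>
    intro hr j hj i hij
    have ih := ih fun l hl => hr l (by omega)
    rcases hj.lt_or_eq with hjm | rfl
    · exact ih j (by omega) i hij
    have hpr : ∀ l ≤ m, p l ⬝ᵥ r l = r l ⬝ᵥ r l := fun l hl =>
      h.dir_dotProduct_residual_self fun i hi => (ih l hl i hi).1
    have hpos : ∀ l ≤ m, 0 < p l ⬝ᵥ (A *ᵥ p l) := fun l hl => by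
      have hp : p l ≠ 0 := fun hp => hr l (by omega) <| dotProduct_self_eq_zero.mp <| by
        rw [← hpr l hl, hp, zero_dotProduct]
      simpa using hA.dotProduct_mulVec_pos hp
    have horth := h.dir_dotProduct_residual_succ (hpr m le_rfl) (hpos m le_rfl).ne'
      (fun i hi => (ih m le_rfl i hi).1) (fun i hi => (ih m le_rfl i hi).2)
    have hres : ∀ l ≤ m, r l ⬝ᵥ r (m + 1) = 0 := fun l hl =>
      h.residual_dotProduct_residual_eq_zero_of_dir_orthogonal horth (by omega)
    have hα : ∀ l ≤ m, α l ≠ 0 := fun l hl => by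
      rw [h.stepSize_eq]
      exact div_ne_zero (fun h0 => hr l (by omega) (dotProduct_self_eq_zero.mp h0))
        (hpos l hl).ne'
    exact ⟨horth i hij, h.dir_dotProduct_mulVec_dir_succ (isHermitian_iff_isSymm.mp hA.1) hα
      (fun i hi => (ih m le_rfl i hi).2) hres i hij⟩

theorem residual_dotProduct_residual_eq_zero (hA : A.PosDef) {i j : ℕ} (hr : ∀ l < j, r l ≠ 0)
    (hij : i < j) : r i ⬝ᵥ r j = 0 :=
  h.residual_dotProduct_residual_eq_zero_of_dir_orthogonal
    (fun l hl => (h.dir_orthogonal_and_conjugate hA j hr j le_rfl l hl).1) hij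

end IsCGSequence

theorem cg_residuals_orthogonal_general (n : ℕ) (A : Matrix (Fin n) (Fin n) ℝ)
    (hA : A.PosDef)
    (r nv : ℕ → (Fin n → ℝ)) (β α : ℕ → ℝ)
    (hn1 : nv 1 = r 0)
    (hβ : ∀ k, 2 ≤ k → β k = (r (k-1) ⬝ᵥ r (k-1)) / (r (k-2) ⬝ᵥ r (k-2)))
    (hn : ∀ k, 2 ≤ k → nv k = β k • nv (k-1) + r (k-1))
    (hα : ∀ k, 1 ≤ k → α k = (r (k-1) ⬝ᵥ r (k-1)) / (nv k ⬝ᵥ (A *ᵥ nv k)))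
    (hrk : ∀ k, 1 ≤ k → r k = r (k-1) - α k • (A *ᵥ nv k)) :
    ∀ i j : ℕ, i ≠ j → (∀ l ≤ max i j, r l ≠ 0) → r i ⬝ᵥ r j = 0 := by
  have h : IsCGSequence A r (fun k => nv (k + 1)) (fun k => α (k + 1)) (fun k => β (k + 2)) :=
    { dir_zero := hn1
      stepSize_eq := fun k => by simpa using hα (k + 1) (by omega)
      residual_succ := fun k => by simpa using hrk (k + 1) (by omega)
      conjCoeff_eq := fun k => by simpa using hβ (k + 2) (by omega)
      dir_succ := fun k => by simpa using hn (k + 2) (by omega) }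
  intro i j hij hr
  rcases hij.lt_or_gt with hlt | hgt
  · exact h.residual_dotProduct_residual_eq_zero hA (fun l hl => hr l (by omega)) hlt
  · rw [dotProduct_comm]
    exact h.residual_dotProduct_residual_eq_zero hA (fun l hl => hr l (by omega)) hgt

theorem cg_residuals_orthogonal (n : ℕ) (A : Matrix (Fin n) (Fin n) ℝ)
    (hA : A.PosDef) (b : Fin n → ℝ)
    (x r nv : ℕ → (Fin n → ℝ)) (β α : ℕ → ℝ)
    (hr0 : r 0 = b - A *ᵥ x 0)
    (hn1 : nv 1 = r 0)
    (hβ : ∀ k, 2 ≤ k → β k = (r (k-1) ⬝ᵥ r (k-1)) / (r (k-2) ⬝ᵥ r (k-2)))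
    (hn : ∀ k, 2 ≤ k → nv k = β k • nv (k-1) + r (k-1))
    (hα : ∀ k, 1 ≤ k → α k = (r (k-1) ⬝ᵥ r (k-1)) / (nv k ⬝ᵥ (A *ᵥ nv k)))
    (hx : ∀ k, 1 ≤ k → x k = x (k-1) + α k • nv k)
    (hrk : ∀ k, 1 ≤ k → r k = r (k-1) - α k • (A *ᵥ nv k)) :
    ∀ i j : ℕ, i ≠ j → (∀ l ≤ max i j, r l ≠ 0) → r i ⬝ᵥ r j = 0 :=
  cg_residuals_orthogonal_general n A hA r nv β α hn1 hβ hn hα hrk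
end
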